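/- arXiv:1110.5368 — 4 statements merged into one kernel-verified Lean document; each statement's English description precedes it below -/
import Mathlib

section
/- For every t > 0 and r > 0, the integral of the n-dimensional Poisson kernel P_t(x) = c_n t / (t² + ‖x‖₂²)^((n+1)/2) over the complement of the Euclidean ball of radius r satisfies ∫_{‖x‖₂ ≥ r} P_t(x) dx ≤ t√n / r. -/
open Real MeasureTheory

/-- The `n`-dimensional Poisson kernel `P_t(x) = c_n t / (t² + ‖x‖₂²)^((n+1)/2)`,
where `c_n = Γ((n+1)/2)/π^((n+1)/2)`. -/
noncomputable def poissonKernelEuclid (n : ℕ) (t : ℝ) (x : EuclideanSpace ℝ (Fin n)) : ℝ :=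
  (Real.Gamma (((n : ℝ) + 1) / 2) / Real.pi ^ (((n : ℝ) + 1) / 2)) * t /
    (t ^ 2 + ‖x‖ ^ 2) ^ (((n : ℝ) + 1) / 2)

private lemma arctan_le_self' {x : ℝ} (hx : 0 < x) : Real.arctan x ≤ x := by
  have h0 : 0 < Real.arctan x := by
    rw [← Real.arctan_zero]; exact Real.arctan_strictMono hx
  have h2 := Real.lt_tan h0 (Real.arctan_lt_pi_div_two x)
  rw [Real.tan_arctan] at h2
  linarith

private lemma hasDerivAt_arctan_div (t : ℝ) (ht : 0 < t) (y : ℝ) :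
    HasDerivAt (fun y : ℝ => Real.arctan (y / t)) (t / (t ^ 2 + y ^ 2)) y := by
  have h := (Real.hasDerivAt_arctan (y / t)).comp y ((hasDerivAt_id y).div_const t)
  refine h.congr_deriv ?_
  have h1 : (0:ℝ) < 1 + (y / t) ^ 2 := by positivity
  field_simp

private lemma poisson1d (t r : ℝ) (ht : 0 < t) :
    IntegrableOn (fun y : ℝ => t / (t ^ 2 + y ^ 2)) (Set.Ioi r) volume ∧
    ∫ y in Set.Ioi r, t / (t ^ 2 + y ^ 2) = π / 2 - Real.arctan (r / t) := by
  have hderiv : ∀ y ∈ Set.Ici r, HasDerivAt (fun y : ℝ => Real.arctan (y / t))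
      (t / (t ^ 2 + y ^ 2)) y := fun y _ => hasDerivAt_arctan_div t ht y
  have hpos : ∀ y ∈ Set.Ioi r, 0 ≤ t / (t ^ 2 + y ^ 2) := fun y _ => by positivity
  have htend : Filter.Tendsto (fun y : ℝ => Real.arctan (y / t)) Filter.atTop (nhds (π / 2)) :=
    (Real.tendsto_arctan_atTop.mono_right nhdsWithin_le_nhds).comp
      (Filter.tendsto_id.atTop_div_const ht)
  exact ⟨integrableOn_Ioi_deriv_of_nonneg' hderiv hpos htend,
    by rw [integral_Ioi_of_hasDerivAt_of_nonneg' hderiv hpos htend]⟩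

private lemma const_bound (n : ℕ) (hn : 1 ≤ n) :
    (n : ℝ) * (Real.sqrt π ^ n / Real.Gamma ((n : ℝ) / 2 + 1)) *
      (Real.Gamma (((n : ℝ) + 1) / 2) / π ^ (((n : ℝ) + 1) / 2)) ≤ Real.sqrt n := by
  have hπ := Real.pi_pos
  have hn0 : (0:ℝ) < n := by exact_mod_cast hn
  set s : ℝ := (n : ℝ) / 2 with hs_def
  have hs : 0 < s := by positivity
  have hΓs : 0 < Real.Gamma s := Real.Gamma_pos_of_pos hs
  have hΓm : 0 < Real.Gamma (((n:ℝ)+1)/2) := Real.Gamma_pos_of_pos (by positivity)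
  have hΓ1 : Real.Gamma (s + 1) = s * Real.Gamma s := Real.Gamma_add_one hs.ne'
  have hΓs1 : 0 < Real.Gamma (s + 1) := by rw [hΓ1]; positivity
  -- log-convexity gives Γ((n+1)/2)² ≤ Γ(s)Γ(s+1)
  have hconv := Real.convexOn_log_Gamma.2 (Set.mem_Ioi.mpr hs)
    (Set.mem_Ioi.mpr (by linarith : (0:ℝ) < s + 1))
    (by norm_num : (0:ℝ) ≤ 1/2) (by norm_num : (0:ℝ) ≤ 1/2) (by norm_num)
  have hmid : (1/2 : ℝ) • s + (1/2 : ℝ) • (s + 1) = ((n:ℝ)+1)/2 := by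
    simp only [smul_eq_mul, hs_def]; ring
  rw [hmid] at hconv
  simp only [Function.comp, smul_eq_mul] at hconv
  have hsq : Real.Gamma (((n:ℝ)+1)/2) ^ 2 ≤ s * Real.Gamma s ^ 2 := by
    have h2 : Real.Gamma (((n:ℝ)+1)/2) ^ 2 ≤ Real.Gamma s * Real.Gamma (s+1) := by
      rw [← Real.log_le_log_iff (by positivity) (by positivity), Real.log_pow,
        Real.log_mul hΓs.ne' hΓs1.ne']
      push_cast
      linarith
    rw [hΓ1] at h2; nlinarith
  have hpow : π ^ (((n:ℝ)+1)/2) = Real.sqrt π ^ n * Real.sqrt π := by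
    have h : ((n:ℝ)+1)/2 = (1/2) * n + 1/2 := by ring
    rw [h, Real.rpow_add hπ, Real.rpow_mul hπ.le, Real.rpow_natCast, Real.sqrt_eq_rpow]
  have hsπ : 0 < Real.sqrt π := Real.sqrt_pos.mpr hπ
  have hP : 0 < Real.sqrt π ^ n := by positivity
  have h2s : (n:ℝ) = 2 * s := by rw [hs_def]; ring
  have hA : (n : ℝ) * (Real.sqrt π ^ n / Real.Gamma (s + 1)) *
      (Real.Gamma (((n:ℝ)+1)/2) / π ^ (((n:ℝ)+1)/2)) =
      2 * Real.Gamma (((n:ℝ)+1)/2) / (Real.Gamma s * Real.sqrt π) := by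
    rw [hΓ1, hpow, h2s]
    field_simp
  rw [hA, Real.le_sqrt (by positivity) (by positivity), div_pow, mul_pow, mul_pow,
    Real.sq_sqrt hπ.le, div_le_iff₀ (by positivity)]
  have hπ3 := Real.pi_gt_three
  nlinarith [hsq, h2s, mul_nonneg (mul_nonneg hs.le (sq_nonneg (Real.Gamma s))) (by linarith : (0:ℝ) ≤ π - 2)]

/-- Tail bound for the Poisson kernel:
`∫_{‖x‖₂ ≥ r} P_t(x) dx ≤ t√n / r` for all `t, r > 0`. -/
theorem poissonKernel_tail_bound (n : ℕ) (hn : 1 ≤ n) (t r : ℝ) (ht : 0 < t) (hr : 0 < r) :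
    (∫ x in {x : EuclideanSpace ℝ (Fin n) | r ≤ ‖x‖}, poissonKernelEuclid n t x) ≤
      t * Real.sqrt n / r := by
  have hπ := Real.pi_pos
  have hn0 : (0:ℝ) < n := by exact_mod_cast hn
  haveI : Nonempty (Fin n) := ⟨⟨0, hn⟩⟩
  set c : ℝ := Real.Gamma (((n:ℝ)+1)/2) / π ^ (((n:ℝ)+1)/2) with hc
  have hc0 : 0 < c :=
    div_pos (Real.Gamma_pos_of_pos (by positivity)) (Real.rpow_pos_of_pos hπ _)
  set g : ℝ → ℝ := fun y => c * t / (t ^ 2 + y ^ 2) ^ (((n:ℝ)+1)/2) with hg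
  set f : ℝ → ℝ := Set.indicator (Set.Ici r) g with hf
  have hS : MeasurableSet {x : EuclideanSpace ℝ (Fin n) | r ≤ ‖x‖} :=
    (isClosed_le continuous_const continuous_norm).measurableSet
  have step1 : (∫ x in {x : EuclideanSpace ℝ (Fin n) | r ≤ ‖x‖}, poissonKernelEuclid n t x)
      = ∫ x : EuclideanSpace ℝ (Fin n), f ‖x‖ := by
    rw [← integral_indicator hS]
    refine integral_congr_ae (Filter.Eventually.of_forall fun x => ?_)
    show Set.indicator {x : EuclideanSpace ℝ (Fin n) | r ≤ ‖x‖} (poissonKernelEuclid n t) x = f ‖x‖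
    rw [hf]
    by_cases hx : r ≤ ‖x‖ <;>
      simp [Set.indicator_apply, Set.mem_setOf_eq, Set.mem_Ici, hx, poissonKernelEuclid, hc, hg]
  rw [step1, MeasureTheory.integral_fun_norm_addHaar volume f, finrank_euclideanSpace_fin,
    nsmul_eq_mul, smul_eq_mul]
  have hV : (volume (Metric.ball (0 : EuclideanSpace ℝ (Fin n)) 1)).toReal =
      Real.sqrt π ^ n / Real.Gamma ((n:ℝ)/2 + 1) := by
    rw [EuclideanSpace.volume_ball, Fintype.card_fin, ENNReal.ofReal_one, one_pow, one_mul,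
      ENNReal.toReal_ofReal]
    exact div_nonneg (by positivity) (Real.Gamma_pos_of_pos (by positivity)).le
  -- inner integral bound
  have key : ∀ y ∈ Set.Ioi r, y ^ (n - 1) * g y ≤ c * (t / (t ^ 2 + y ^ 2)) := by
    intro y hy
    have hy0 : (0:ℝ) < y := hr.trans hy
    have hD : (0:ℝ) < t ^ 2 + y ^ 2 := by positivity
    have hDq : (0:ℝ) < (t ^ 2 + y ^ 2) ^ (((n:ℝ)+1)/2) := Real.rpow_pos_of_pos hD _
    have h1 : (y:ℝ) ^ (n - 1) ≤ (t ^ 2 + y ^ 2) ^ (((n:ℝ)-1)/2) := by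
      have e1 : ((y:ℝ) ^ 2) ^ (((n:ℝ)-1)/2) = y ^ ((n:ℝ)-1) := by
        rw [← Real.rpow_natCast y 2, ← Real.rpow_mul hy0.le]
        congr 1
        push_cast
        ring
      have e2 : (y:ℝ) ^ ((n:ℝ)-1) = y ^ (n - 1) := by
        rw [← Real.rpow_natCast y (n - 1), Nat.cast_sub hn, Nat.cast_one]
      rw [← e2, ← e1]
      apply Real.rpow_le_rpow (by positivity) (by nlinarith)
      have : (1:ℝ) ≤ n := by exact_mod_cast hn
      linarith
    have hD2 : (t ^ 2 + y ^ 2) ^ (((n:ℝ)+1)/2) =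
        (t ^ 2 + y ^ 2) ^ (((n:ℝ)-1)/2) * (t ^ 2 + y ^ 2) := by
      have he : ((n:ℝ)+1)/2 = ((n:ℝ)-1)/2 + 1 := by ring
      rw [he, Real.rpow_add hD, Real.rpow_one]
    have hDp : (0:ℝ) < (t ^ 2 + y ^ 2) ^ (((n:ℝ)-1)/2) := Real.rpow_pos_of_pos hD _
    have hLHS : y ^ (n - 1) * g y = c * t * y ^ (n - 1) / (t ^ 2 + y ^ 2) ^ (((n:ℝ)+1)/2) := by
      rw [hg]; ring
    rw [hLHS, div_le_iff₀ hDq]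
    have hRHS : c * (t / (t ^ 2 + y ^ 2)) * (t ^ 2 + y ^ 2) ^ (((n:ℝ)+1)/2) =
        c * t * (t ^ 2 + y ^ 2) ^ (((n:ℝ)-1)/2) := by
      rw [hD2]; field_simp
    rw [hRHS]
    exact mul_le_mul_of_nonneg_left h1 (by positivity)
  have hinner : (∫ y in Set.Ioi (0:ℝ), y ^ (n - 1) • f y) ≤ c * (t / r) := by
    have heq : ∀ y : ℝ, y ^ (n - 1) • f y =
        Set.indicator (Set.Ici r) (fun y => y ^ (n - 1) * g y) y := by
      intro y
      by_cases hy : y ∈ Set.Ici r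
      · rw [hf, Set.indicator_of_mem hy, Set.indicator_of_mem hy, smul_eq_mul]
      · rw [hf, Set.indicator_of_notMem hy, Set.indicator_of_notMem hy, smul_zero]
    simp_rw [heq]
    have hsub : Set.Ici r ⊆ Set.Ioi (0:ℝ) := fun y hy => lt_of_lt_of_le hr hy
    rw [integral_indicator measurableSet_Ici, Measure.restrict_restrict measurableSet_Ici,
      Set.inter_eq_left.mpr hsub, integral_Ici_eq_integral_Ioi]
    have hmono : (∫ y in Set.Ioi r, y ^ (n - 1) * g y) ≤
        ∫ y in Set.Ioi r, c * (t / (t ^ 2 + y ^ 2)) := by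
      apply integral_mono_of_nonneg
      · filter_upwards [ae_restrict_mem measurableSet_Ioi] with y hy
        have hy0 : (0:ℝ) < y := hr.trans hy
        have hD : (0:ℝ) < t ^ 2 + y ^ 2 := by positivity
        have := Real.rpow_pos_of_pos hD (((n:ℝ)+1)/2)
        rw [hg]
        positivity
      · exact ((poisson1d t r ht).1.const_mul c)
      · filter_upwards [ae_restrict_mem measurableSet_Ioi] with y hy
        exact key y hy
    have hval : (∫ y in Set.Ioi r, c * (t / (t ^ 2 + y ^ 2))) =
        c * (π / 2 - Real.arctan (r / t)) := by
      rw [integral_const_mul, (poisson1d t r ht).2]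
    have harc : π / 2 - Real.arctan (r / t) ≤ t / r := by
      have h1 : Real.arctan ((r / t)⁻¹) = π / 2 - Real.arctan (r / t) :=
        Real.arctan_inv_of_pos (by positivity)
      rw [← h1, inv_div]
      exact arctan_le_self' (by positivity)
    calc (∫ y in Set.Ioi r, y ^ (n - 1) * g y) ≤ c * (π / 2 - Real.arctan (r / t)) := by
          rw [← hval]; exact hmono
      _ ≤ c * (t / r) := mul_le_mul_of_nonneg_left harc hc0.le
  have hVpos : (0:ℝ) ≤ (volume (Metric.ball (0 : EuclideanSpace ℝ (Fin n)) 1)).toReal :=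
    ENNReal.toReal_nonneg
  calc (n : ℝ) * ((volume (Metric.ball (0 : EuclideanSpace ℝ (Fin n)) 1)).toReal *
        ∫ y in Set.Ioi (0:ℝ), y ^ (n - 1) • f y)
      ≤ (n : ℝ) * ((volume (Metric.ball (0 : EuclideanSpace ℝ (Fin n)) 1)).toReal *
        (c * (t / r))) := by
        apply mul_le_mul_of_nonneg_left (mul_le_mul_of_nonneg_left hinner hVpos) hn0.le
    _ = ((n : ℝ) * (Real.sqrt π ^ n / Real.Gamma ((n:ℝ)/2 + 1)) * c) * (t / r) := by
        rw [hV]; ring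
    _ ≤ Real.sqrt n * (t / r) :=
        mul_le_mul_of_nonneg_right (const_bound n hn) (by positivity)
    _ = t * Real.sqrt n / r := by ring
end

section
/- For every n ≥ 1 and s > 0, the function s ↦ sⁿ/(1+s²)^((n+1)/2) attains its maximum at s = √n, and hence sⁿ/(1+s²)^((n+1)/2) ≤ min{1/√(en), 1/s} for all s > 0. -/
open Real

lemma aux_main (n : ℕ) (hn : 1 ≤ n) (s : ℝ) (hs : 0 < s) :
    s ^ n / (1 + s ^ 2) ^ (((n : ℝ) + 1) / 2) ≤
      (n : ℝ) ^ ((n : ℝ) / 2) / (1 + (n : ℝ)) ^ (((n : ℝ) + 1) / 2) := by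
  have hn0 : (0:ℝ) < n := by exact_mod_cast hn
  have hn1 : (0:ℝ) < (n:ℝ) + 1 := by positivity
  have hs2 : (0:ℝ) < 1 + s ^ 2 := by positivity
  have key : ((s^2 / n) : ℝ) ^ ((n:ℝ)/((n:ℝ)+1)) ≤ (1 + s^2) / ((n:ℝ)+1) := by
    have h := Real.geom_mean_le_arith_mean2_weighted
      (w₁ := 1/((n:ℝ)+1)) (w₂ := (n:ℝ)/((n:ℝ)+1)) (p₁ := 1) (p₂ := s^2/n)
      (by positivity) (by positivity) (by norm_num) (by positivity)
      (by field_simp; ring)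
    rw [Real.one_rpow, one_mul] at h
    calc ((s^2/n) : ℝ) ^ ((n:ℝ)/((n:ℝ)+1))
        ≤ 1/((n:ℝ)+1) * 1 + (n:ℝ)/((n:ℝ)+1) * (s^2/n) := h
      _ = (1 + s^2)/((n:ℝ)+1) := by field_simp
  have key2 : ((s^2/n) : ℝ) ^ ((n:ℝ)/2) ≤ ((1+s^2)/((n:ℝ)+1)) ^ (((n:ℝ)+1)/2) := by
    have h := Real.rpow_le_rpow (by positivity) key
      (by positivity : (0:ℝ) ≤ ((n:ℝ)+1)/2)
    rwa [← Real.rpow_mul (by positivity),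
      show (n:ℝ)/((n:ℝ)+1) * (((n:ℝ)+1)/2) = (n:ℝ)/2 by field_simp] at h
  have hsn : (s^2 : ℝ) ^ ((n:ℝ)/2) = s ^ n := by
    rw [← Real.rpow_natCast s 2, ← Real.rpow_mul hs.le,
      show ((2:ℕ):ℝ) * ((n:ℝ)/2) = (n:ℝ) by push_cast; ring, Real.rpow_natCast]
  rw [Real.div_rpow (by positivity) hn0.le, hsn,
    Real.div_rpow hs2.le hn1.le] at key2
  rw [div_le_div_iff₀ (by positivity) (by positivity)] at key2 ⊢
  rw [add_comm 1 (n:ℝ)]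
  calc s ^ n * ((n:ℝ)+1) ^ (((n:ℝ)+1)/2)
      ≤ (1 + s^2) ^ (((n:ℝ)+1)/2) * (n:ℝ) ^ ((n:ℝ)/2) := key2
    _ = (n:ℝ) ^ ((n:ℝ)/2) * (1 + s^2) ^ (((n:ℝ)+1)/2) := mul_comm _ _

lemma aux_exp (n : ℕ) (hn : 1 ≤ n) :
    Real.exp 1 * (n:ℝ) ^ (n+1) ≤ (1 + (n:ℝ)) ^ (n+1) := by
  have hn0 : (0:ℝ) < n := by exact_mod_cast hn
  have hn1 : (0:ℝ) < (n:ℝ) + 1 := by positivity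
  have h2 : (n:ℝ)/((n:ℝ)+1) ≤ (Real.exp (1/((n:ℝ)+1)))⁻¹ := by
    rw [← Real.exp_neg]
    calc (n:ℝ)/((n:ℝ)+1) = -(1/((n:ℝ)+1)) + 1 := by field_simp; ring
      _ ≤ _ := Real.add_one_le_exp _
  have h1 : Real.exp (1/((n:ℝ)+1)) ≤ ((n:ℝ)+1)/n := by
    rw [le_div_iff₀ hn0]
    have h3 := mul_le_mul_of_nonneg_left h2 (Real.exp_pos (1/((n:ℝ)+1))).le
    rw [mul_inv_cancel₀ (Real.exp_pos _).ne'] at h3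
    have h4 := mul_le_mul_of_nonneg_right h3 hn1.le
    rw [one_mul, mul_assoc, div_mul_cancel₀ _ hn1.ne'] at h4
    linarith
  have h3 : Real.exp (1/((n:ℝ)+1)) ^ (n+1) ≤ (((n:ℝ)+1)/n) ^ (n+1) :=
    pow_le_pow_left₀ (Real.exp_pos _).le h1 _
  have h4 : Real.exp (1/((n:ℝ)+1)) ^ (n+1) = Real.exp 1 := by
    rw [← Real.exp_nat_mul]
    congr 1
    push_cast
    field_simp
  rw [h4, div_pow, le_div_iff₀ (by positivity)] at h3
  calc Real.exp 1 * (n:ℝ)^(n+1) ≤ ((n:ℝ)+1)^(n+1) := h3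
    _ = (1 + (n:ℝ))^(n+1) := by ring

/-- The function `s ↦ sⁿ/(1+s²)^((n+1)/2)` attains its maximum on `(0,∞)` at `s = √n`,
and consequently it is bounded by `min{1/√(en), 1/s}` for all `s > 0`. -/
theorem pow_div_one_add_sq_max (n : ℕ) (hn : 1 ≤ n) :
    (∀ s : ℝ, 0 < s →
      s ^ n / (1 + s ^ 2) ^ (((n : ℝ) + 1) / 2) ≤
        Real.sqrt n ^ n / (1 + Real.sqrt n ^ 2) ^ (((n : ℝ) + 1) / 2)) ∧
    (∀ s : ℝ, 0 < s →
      s ^ n / (1 + s ^ 2) ^ (((n : ℝ) + 1) / 2) ≤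
        min (1 / Real.sqrt (Real.exp 1 * n)) (1 / s)) := by
  have hn0 : (0:ℝ) < n := by exact_mod_cast hn
  have hn1 : (0:ℝ) < (n:ℝ) + 1 := by positivity
  have hsq : Real.sqrt n ^ 2 = (n:ℝ) := Real.sq_sqrt hn0.le
  have hsn : Real.sqrt n ^ n = (n:ℝ) ^ ((n:ℝ)/2) := by
    rw [← Real.rpow_natCast (Real.sqrt n) n, Real.sqrt_eq_rpow,
      ← Real.rpow_mul hn0.le]
    congr 1
    ring
  have hmax : ∀ s : ℝ, 0 < s →
      s ^ n / (1 + s ^ 2) ^ (((n : ℝ) + 1) / 2) ≤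
        Real.sqrt n ^ n / (1 + Real.sqrt n ^ 2) ^ (((n : ℝ) + 1) / 2) := by
    intro s hs
    rw [hsq, hsn]
    exact aux_main n hn s hs
  refine ⟨hmax, fun s hs => le_min ?_ ?_⟩
  · -- bound by 1/√(en)
    refine (hmax s hs).trans ?_
    rw [hsq, hsn]
    have hA : (0:ℝ) ≤ (n:ℝ) ^ ((n:ℝ)/2) * Real.sqrt (Real.exp 1 * n) := by positivity
    have hB : (0:ℝ) ≤ (1 + (n:ℝ)) ^ (((n:ℝ)+1)/2) := by positivity
    have hAB : (n:ℝ) ^ ((n:ℝ)/2) * Real.sqrt (Real.exp 1 * n) ≤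
        (1 + (n:ℝ)) ^ (((n:ℝ)+1)/2) := by
      rw [← pow_le_pow_iff_left₀ hA hB (two_ne_zero)]
      have e1 : ((n:ℝ) ^ ((n:ℝ)/2) * Real.sqrt (Real.exp 1 * n)) ^ 2
          = Real.exp 1 * (n:ℝ) ^ (n+1) := by
        rw [mul_pow, Real.sq_sqrt (by positivity),
          ← Real.rpow_natCast ((n:ℝ) ^ ((n:ℝ)/2)) 2, ← Real.rpow_mul hn0.le,
          show (n:ℝ)/2 * ((2:ℕ):ℝ) = ((n:ℕ):ℝ) by push_cast; ring,
          Real.rpow_natCast]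
        ring
      have e2 : ((1 + (n:ℝ)) ^ (((n:ℝ)+1)/2)) ^ 2 = (1 + (n:ℝ)) ^ (n+1) := by
        rw [← Real.rpow_natCast ((1+(n:ℝ)) ^ (((n:ℝ)+1)/2)) 2,
          ← Real.rpow_mul (by positivity : (0:ℝ) ≤ 1 + (n:ℝ)),
          show ((n:ℝ)+1)/2 * ((2:ℕ):ℝ) = (((n+1:ℕ)):ℝ) by push_cast; ring,
          Real.rpow_natCast]
      rw [e1, e2]
      exact aux_exp n hn
    rw [div_le_div_iff₀ (by positivity)
      (by positivity : (0:ℝ) < Real.sqrt (Real.exp 1 * n)), one_mul]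
    exact hAB
  · -- bound by 1/s
    have hs2 : (0:ℝ) < 1 + s ^ 2 := by positivity
    rw [div_le_div_iff₀ (by positivity) hs, one_mul]
    have h1 : (s^2 : ℝ) ^ (((n:ℝ)+1)/2) ≤ (1 + s^2) ^ (((n:ℝ)+1)/2) :=
      Real.rpow_le_rpow (by positivity) (by linarith) (by positivity)
    have h2 : (s^2 : ℝ) ^ (((n:ℝ)+1)/2) = s ^ n * s := by
      rw [← Real.rpow_natCast s 2, ← Real.rpow_mul hs.le,
        show ((2:ℕ):ℝ) * (((n:ℝ)+1)/2) = (n:ℝ)+1 by push_cast; ring,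
        Real.rpow_add hs, Real.rpow_natCast, Real.rpow_one]
    rw [← h2]
    exact h1
end

section
/- For every n ≥ 1 and every t ∈ (0, 1/2], the integral ∫₀^{4√n/t} sⁿ/(1+s²)^((n+1)/2) ds is at most 1 + log(4/(t√e)). -/
open Real MeasureTheory intervalIntegral

lemma aux_amgm (n : ℕ) (hn : 1 ≤ n) (x : ℝ) (hx : 0 ≤ x) :
    Real.exp 1 * n * x ^ n ≤ (1 + x) ^ (n + 1) := by
  have hn0 : (0:ℝ) < n := by exact_mod_cast hn
  have hn1 : (0:ℝ) < (n:ℝ) + 1 := by positivity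
  -- Step 3: e * n^(n+1) ≤ (n+1)^(n+1)
  have h3 : Real.exp 1 * (n:ℝ) ^ (n+1) ≤ ((n:ℝ)+1) ^ (n+1) := by
    have h := Real.add_one_le_exp (-(1/((n:ℝ)+1)))
    have h' : (n:ℝ)/((n:ℝ)+1) ≤ Real.exp (-(1/((n:ℝ)+1))) := by
      have heq : (n:ℝ)/((n:ℝ)+1) = -(1/((n:ℝ)+1)) + 1 := by field_simp; ring
      linarith [heq ▸ h]
    have hp : ((n:ℝ)/((n:ℝ)+1)) ^ (n+1) ≤ Real.exp (-(1/((n:ℝ)+1))) ^ (n+1) :=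
      pow_le_pow_left₀ (by positivity) h' _
    rw [← Real.exp_nat_mul] at hp
    have he : ((n+1 : ℕ) : ℝ) * -(1/((n:ℝ)+1)) = -1 := by
      push_cast; field_simp; try ring
    rw [he] at hp
    have hp' : Real.exp 1 * ((n:ℝ)/((n:ℝ)+1)) ^ (n+1) ≤ 1 := by
      calc Real.exp 1 * ((n:ℝ)/((n:ℝ)+1)) ^ (n+1) ≤ Real.exp 1 * Real.exp (-1) :=
            mul_le_mul_of_nonneg_left hp (Real.exp_nonneg 1)
        _ = 1 := by rw [← Real.exp_add]; simp
    rw [div_pow] at hp'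
    have hpos : (0:ℝ) < ((n:ℝ)+1)^(n+1) := by positivity
    calc Real.exp 1 * (n:ℝ) ^ (n+1)
        = (Real.exp 1 * ((n:ℝ)^(n+1) / ((n:ℝ)+1)^(n+1))) * ((n:ℝ)+1)^(n+1) := by
          field_simp
      _ ≤ 1 * ((n:ℝ)+1)^(n+1) := mul_le_mul_of_nonneg_right hp' (le_of_lt hpos)
      _ = ((n:ℝ)+1)^(n+1) := one_mul _
  -- Step 1: AM-GM
  have hw : 1/((n:ℝ)+1) + (n:ℝ)/((n:ℝ)+1) = 1 := by field_simp; ring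
  have hgm := Real.geom_mean_le_arith_mean2_weighted
    (w₁ := 1/((n:ℝ)+1)) (w₂ := (n:ℝ)/((n:ℝ)+1)) (p₁ := 1) (p₂ := x / n)
    (by positivity) (by positivity) zero_le_one (by positivity) hw
  rw [Real.one_rpow, one_mul] at hgm
  have hrhs : 1/((n:ℝ)+1) * 1 + (n:ℝ)/((n:ℝ)+1) * (x / n) = (1+x)/((n:ℝ)+1) := by
    field_simp
  rw [hrhs] at hgm
  -- Step 2: raise to (n+1)-th power
  have hxn : (0:ℝ) ≤ x / n := by positivity
  have hp2 : ((x/n) ^ ((n:ℝ)/((n:ℝ)+1))) ^ (n+1) ≤ ((1+x)/((n:ℝ)+1)) ^ (n+1) :=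
    pow_le_pow_left₀ (Real.rpow_nonneg hxn _) hgm _
  have hlhs : ((x/n) ^ ((n:ℝ)/((n:ℝ)+1))) ^ (n+1) = (x/n) ^ n := by
    rw [← Real.rpow_natCast ((x/n) ^ ((n:ℝ)/((n:ℝ)+1))) (n+1), ← Real.rpow_mul hxn]
    have h5 : (n:ℝ)/((n:ℝ)+1) * ((n+1 : ℕ) : ℝ) = (n:ℝ) := by push_cast; field_simp
    rw [h5, Real.rpow_natCast]
  rw [hlhs, div_pow, div_pow] at hp2
  -- combine
  have hnn : (0:ℝ) < (n:ℝ)^n := by positivity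
  have hd1 : x^n * ((n:ℝ)+1)^(n+1) ≤ (1+x)^(n+1) * (n:ℝ)^n := by
    rw [div_le_div_iff₀ hnn (by positivity)] at hp2
    linarith
  have hkey : Real.exp 1 * (n:ℝ)^(n+1) * x^n ≤ (1+x)^(n+1) * (n:ℝ)^n := by
    calc Real.exp 1 * (n:ℝ)^(n+1) * x^n ≤ ((n:ℝ)+1)^(n+1) * x^n :=
          mul_le_mul_of_nonneg_right h3 (pow_nonneg hx n)
      _ = x^n * ((n:ℝ)+1)^(n+1) := mul_comm _ _
      _ ≤ _ := hd1
  have hkey2 : (Real.exp 1 * n * x^n) * (n:ℝ)^n ≤ (1+x)^(n+1) * (n:ℝ)^n := by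
    calc (Real.exp 1 * n * x^n) * (n:ℝ)^n = Real.exp 1 * (n:ℝ)^(n+1) * x^n := by
          rw [pow_succ]; ring
      _ ≤ _ := hkey
  exact le_of_mul_le_mul_right hkey2 hnn

lemma denom_ge (n : ℕ) (hn : 1 ≤ n) (s : ℝ) (hs : 0 ≤ s) :
    Real.sqrt (Real.exp 1) * Real.sqrt n * s ^ n ≤ (1 + s^2) ^ (((n:ℝ)+1)/2) := by
  have h := aux_amgm n hn (s^2) (by positivity)
  have key := Real.sqrt_le_sqrt h
  have hL : Real.sqrt (Real.exp 1 * n * (s^2)^n)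
      = Real.sqrt (Real.exp 1) * Real.sqrt n * s ^ n := by
    rw [Real.sqrt_mul (by positivity), Real.sqrt_mul (Real.exp_nonneg 1)]
    congr 1
    rw [← pow_mul, mul_comm 2 n, pow_mul, Real.sqrt_sq (by positivity)]
  have hR : Real.sqrt ((1 + s^2) ^ (n+1)) = (1 + s^2) ^ (((n:ℝ)+1)/2) := by
    rw [Real.sqrt_eq_rpow, ← Real.rpow_natCast (1+s^2) (n+1),
      ← Real.rpow_mul (by positivity)]
    congr 1
    push_cast; ring
  rw [hL, hR] at key
  exact key

lemma integrand_cont (n : ℕ) :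
    Continuous (fun s : ℝ => s ^ n / (1 + s ^ 2) ^ (((n : ℝ) + 1) / 2)) := by
  apply Continuous.div (by continuity)
  · exact Continuous.rpow_const (by continuity) (fun x => Or.inl (by positivity))
  · intro x
    exact ne_of_gt (Real.rpow_pos_of_pos (by positivity) _)

/-- For `n ≥ 1` and `t ∈ (0, 1/2]`, the integral `∫₀^{4√n/t} sⁿ/(1+s²)^((n+1)/2) ds`
is at most `1 + log(4/(t√e))`. -/
theorem integral_pow_div_one_add_sq_le (n : ℕ) (hn : 1 ≤ n) (t : ℝ) (ht : 0 < t)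
    (ht' : t ≤ 1 / 2) :
    (∫ s in (0 : ℝ)..(4 * Real.sqrt n / t), s ^ n / (1 + s ^ 2) ^ (((n : ℝ) + 1) / 2)) ≤
      1 + Real.log (4 / (t * Real.sqrt (Real.exp 1))) := by
  set f : ℝ → ℝ := fun s => s ^ n / (1 + s ^ 2) ^ (((n : ℝ) + 1) / 2) with hf
  set A : ℝ := 4 * Real.sqrt n / t with hA
  set c : ℝ := Real.sqrt (Real.exp 1) * Real.sqrt n with hc
  have hsn : (1:ℝ) ≤ Real.sqrt n := by
    rw [show (1:ℝ) = Real.sqrt 1 by simp]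
    exact Real.sqrt_le_sqrt (by exact_mod_cast hn)
  have hse : (1:ℝ) ≤ Real.sqrt (Real.exp 1) := by
    simpa using Real.sqrt_le_sqrt (show (1:ℝ) ≤ Real.exp 1 by
      linarith [Real.add_one_le_exp (1:ℝ)])
  have h4 : Real.sqrt 4 = 2 := by
    rw [show (4:ℝ) = 2^2 by norm_num]; exact Real.sqrt_sq (by norm_num)
  have hse2 : Real.sqrt (Real.exp 1) ≤ 2 := by
    rw [← h4]
    exact Real.sqrt_le_sqrt (by linarith [Real.exp_one_lt_d9])
  have hc0 : 0 < c := by positivity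
  have hc1 : 1 ≤ c := by nlinarith
  have hcA : c ≤ A := by
    rw [hA, hc, le_div_iff₀ ht]
    nlinarith [Real.sqrt_nonneg (n:ℝ)]
  have hdenpos : ∀ s : ℝ, (0:ℝ) < (1 + s ^ 2) ^ (((n : ℝ) + 1) / 2) :=
    fun s => Real.rpow_pos_of_pos (by positivity) _
  have hcont := integrand_cont n
  have hint1 : IntervalIntegrable f volume 0 c := hcont.intervalIntegrable _ _
  have hint2 : IntervalIntegrable f volume c A := hcont.intervalIntegrable _ _
  have hsplit : (∫ s in (0:ℝ)..A, f s) = (∫ s in (0:ℝ)..c, f s) + ∫ s in c..A, f s :=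
    (integral_add_adjacent_intervals hint1 hint2).symm
  -- first piece ≤ 1
  have hb1 : (∫ s in (0:ℝ)..c, f s) ≤ 1 := by
    have hmono : (∫ s in (0:ℝ)..c, f s) ≤ ∫ _ in (0:ℝ)..c, 1/c := by
      apply integral_mono_on (le_of_lt hc0) hint1 intervalIntegrable_const
      intro s hs
      show s ^ n / (1 + s ^ 2) ^ (((n : ℝ) + 1) / 2) ≤ 1 / c
      rw [div_le_div_iff₀ (hdenpos s) hc0]
      calc s ^ n * c = c * s ^ n := mul_comm _ _
        _ ≤ (1 + s^2) ^ (((n:ℝ)+1)/2) := denom_ge n hn s hs.1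
        _ = 1 * (1 + s^2) ^ (((n:ℝ)+1)/2) := (one_mul _).symm
    rw [intervalIntegral.integral_const] at hmono
    simp only [sub_zero, smul_eq_mul] at hmono
    rw [mul_one_div, div_self (ne_of_gt hc0)] at hmono
    exact hmono
  -- second piece ≤ log (A/c)
  have h0notin : (0:ℝ) ∉ Set.uIcc c A := by
    rw [Set.uIcc_of_le hcA]
    intro h0
    exact absurd h0.1 (by linarith)
  have hintinv : IntervalIntegrable (fun s : ℝ => 1/s) volume c A := by
    apply ContinuousOn.intervalIntegrable
    apply ContinuousOn.div continuousOn_const continuousOn_id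
    intro x hx
    intro h0
    exact h0notin (h0 ▸ hx)
  have hb2 : (∫ s in c..A, f s) ≤ Real.log (A/c) := by
    have hmono : (∫ s in c..A, f s) ≤ ∫ s in c..A, 1/s := by
      apply integral_mono_on hcA hint2 hintinv
      intro s hs
      have hs0 : (0:ℝ) < s := lt_of_lt_of_le (by linarith) hs.1
      show s ^ n / (1 + s ^ 2) ^ (((n : ℝ) + 1) / 2) ≤ 1 / s
      rw [div_le_div_iff₀ (hdenpos s) hs0]
      have hpow : s ^ (n+1) ≤ (1 + s^2) ^ (((n:ℝ)+1)/2) := by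
        have h1 : (s^2 : ℝ) ^ (((n:ℝ)+1)/2) ≤ (1 + s^2) ^ (((n:ℝ)+1)/2) :=
          Real.rpow_le_rpow (by positivity) (by linarith) (by positivity)
        have h2 : (s^2 : ℝ) ^ (((n:ℝ)+1)/2) = s ^ (n+1) := by
          rw [← Real.rpow_natCast s 2, ← Real.rpow_mul (le_of_lt hs0)]
          rw [show ((2:ℕ):ℝ) * (((n:ℝ)+1)/2) = ((n+1:ℕ):ℝ) by push_cast; ring]
          rw [Real.rpow_natCast]
        rw [← h2]; exact h1
      calc s ^ n * s = s ^ (n+1) := (pow_succ s n).symm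
        _ ≤ (1 + s^2) ^ (((n:ℝ)+1)/2) := hpow
        _ = 1 * (1 + s^2) ^ (((n:ℝ)+1)/2) := (one_mul _).symm
    rw [integral_one_div h0notin] at hmono
    exact hmono
  have hAc : A / c = 4 / (t * Real.sqrt (Real.exp 1)) := by
    rw [hA, hc]
    have hn0 : Real.sqrt (n:ℝ) ≠ 0 := by positivity
    field_simp
  calc (∫ s in (0:ℝ)..A, f s) = (∫ s in (0:ℝ)..c, f s) + ∫ s in c..A, f s := hsplit
    _ ≤ 1 + Real.log (A/c) := add_le_add hb1 hb2
    _ = 1 + Real.log (4 / (t * Real.sqrt (Real.exp 1))) := by rw [hAc]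
end

section
/- Let X, Y be Banach spaces and suppose that for every k ∈ ℕ there is a map f_k from a (1/k)-net 𝒩_{1/k} of B_X to Y with ‖x−y‖_X ≤ ‖f_k(x) − f_k(y)‖_Y ≤ (1−ε)D‖x−y‖_X for all x, y ∈ 𝒩_{1/k}. Then, taking a free ultrafilter 𝒰 on ℕ and defining f_𝒰 : B_X → Y_𝒰 (the ultrapower of Y) by f_𝒰(x) = equivalence class of (f_k(z_k(x)))_k where z_k(x) ∈ 𝒩_{1/k} satisfies ‖x − z_k(x)‖_X ≤ 1/k, the map f_𝒰 satisfies ‖x−y‖_X ≤ ‖f_𝒰(x) − f_𝒰(y)‖_{Y_𝒰} ≤ (1−ε)D‖x−y‖_X for all x, y ∈ B_X. -/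
open Filter Metric

/-- **Ultrapower limit of net embeddings.** Suppose that for each `k ≥ 1` there is a
`(1/k)`-net `N k` of `B_X` and `f k : N k → Y` with
`‖x−y‖ ≤ ‖f_k(x)−f_k(y)‖ ≤ (1−ε)D‖x−y‖` on `N k`, and `z k x ∈ N k` is a point with
`‖x − z_k(x)‖ ≤ 1/k`. Then for a free ultrafilter `𝒰` on `ℕ`, the distance in the
ultrapower `Y_𝒰` between `f_𝒰(x)` and `f_𝒰(y)`, namely the `𝒰`-limit of
`‖f_k(z_k(x)) − f_k(z_k(y))‖`, lies between `‖x−y‖` and `(1−ε)D‖x−y‖` for all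
`x, y ∈ B_X`. -/
theorem ultrapower_embedding_of_nets {X Y : Type*}
    [NormedAddCommGroup X] [NormedSpace ℝ X] [NormedAddCommGroup Y] [NormedSpace ℝ Y]
    (ε D : ℝ) (hε : ε ∈ Set.Ioo (0 : ℝ) 1) (hD : 1 ≤ D)
    (N : ℕ → Set X) (hNsub : ∀ k, N k ⊆ closedBall (0 : X) 1)
    (hNnet : ∀ k, 1 ≤ k → ∀ x ∈ closedBall (0 : X) 1, ∃ p ∈ N k, ‖x - p‖ ≤ 1 / k)
    (f : ℕ → X → Y)
    (hf : ∀ k, ∀ x ∈ N k, ∀ y ∈ N k,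
      ‖x - y‖ ≤ ‖f k x - f k y‖ ∧ ‖f k x - f k y‖ ≤ (1 - ε) * D * ‖x - y‖)
    (z : ℕ → X → X)
    (hz : ∀ k, 1 ≤ k → ∀ x ∈ closedBall (0 : X) 1, z k x ∈ N k ∧ ‖x - z k x‖ ≤ 1 / k)
    (𝒰 : Ultrafilter ℕ) (hfree : (𝒰 : Filter ℕ) ≤ Filter.cofinite) :
    ∀ x ∈ closedBall (0 : X) 1, ∀ y ∈ closedBall (0 : X) 1,
      ∃ l : ℝ, Tendsto (fun k => ‖f k (z k x) - f k (z k y)‖) (𝒰 : Filter ℕ) (nhds l) ∧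
        ‖x - y‖ ≤ l ∧ l ≤ (1 - ε) * D * ‖x - y‖ := by

  intro x hx y hy
  set g : ℕ → ℝ := fun k => ‖f k (z k x) - f k (z k y)‖ with hg
  -- eventual facts along 𝒰
  have hatTop : (𝒰 : Filter ℕ) ≤ atTop := by
    rw [← Nat.cofinite_eq_atTop]; exact hfree
  have hev : ∀ᶠ k in (𝒰 : Filter ℕ), 1 ≤ k := hatTop (eventually_ge_atTop 1)
  -- a k tends to ‖x - y‖ along 𝒰
  have ha : Tendsto (fun k : ℕ => ‖z k x - z k y‖) (𝒰 : Filter ℕ) (nhds ‖x - y‖) := by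
    apply Tendsto.mono_left _ hatTop
    have h2k : Tendsto (fun k : ℕ => ‖x - y‖ + 2 * (1 / k)) atTop (nhds (‖x - y‖ + 2 * 0)) :=
      tendsto_const_nhds.add (tendsto_one_div_atTop_nhds_zero_nat.const_mul 2)
    have h2k' : Tendsto (fun k : ℕ => ‖x - y‖ - 2 * (1 / k)) atTop (nhds (‖x - y‖ - 2 * 0)) :=
      tendsto_const_nhds.sub (tendsto_one_div_atTop_nhds_zero_nat.const_mul 2)
    rw [mul_zero, add_zero] at h2k
    rw [mul_zero, sub_zero] at h2k'
    refine tendsto_of_tendsto_of_tendsto_of_le_of_le' h2k' h2k ?_ ?_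
    · filter_upwards [eventually_ge_atTop 1] with k hk
      have hzx := hz k hk x hx
      have hzy := hz k hk y hy
      have : ‖x - y‖ ≤ ‖z k x - z k y‖ + (1/k + 1/k) := by
        calc ‖x - y‖ = ‖(x - z k x) + (z k x - z k y) + (z k y - y)‖ := by congr 1; abel
          _ ≤ ‖(x - z k x) + (z k x - z k y)‖ + ‖z k y - y‖ := norm_add_le _ _
          _ ≤ ‖x - z k x‖ + ‖z k x - z k y‖ + ‖z k y - y‖ := by
              gcongr; exact norm_add_le _ _
          _ ≤ 1/k + ‖z k x - z k y‖ + 1/k := by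
              gcongr
              · exact hzx.2
              · rw [norm_sub_rev]; exact hzy.2
          _ = ‖z k x - z k y‖ + (1/k + 1/k) := by ring
      linarith
    · filter_upwards [eventually_ge_atTop 1] with k hk
      have hzx := hz k hk x hx
      have hzy := hz k hk y hy
      have : ‖z k x - z k y‖ ≤ ‖x - y‖ + (1/k + 1/k) := by
        calc ‖z k x - z k y‖ = ‖(z k x - x) + (x - y) + (y - z k y)‖ := by congr 1; abel
          _ ≤ ‖(z k x - x) + (x - y)‖ + ‖y - z k y‖ := norm_add_le _ _
          _ ≤ ‖z k x - x‖ + ‖x - y‖ + ‖y - z k y‖ := by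
              gcongr; exact norm_add_le _ _
          _ ≤ 1/k + ‖x - y‖ + 1/k := by
              gcongr
              · rw [norm_sub_rev]; exact hzx.2
              · exact hzy.2
          _ = ‖x - y‖ + (1/k + 1/k) := by ring
      linarith
  -- bounds on g along 𝒰
  have hlow : ∀ᶠ k in (𝒰 : Filter ℕ), ‖z k x - z k y‖ ≤ g k := by
    filter_upwards [hev] with k hk
    exact (hf k _ (hz k hk x hx).1 _ (hz k hk y hy).1).1
  have hhigh : ∀ᶠ k in (𝒰 : Filter ℕ), g k ≤ (1 - ε) * D * ‖z k x - z k y‖ := by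
    filter_upwards [hev] with k hk
    exact (hf k _ (hz k hk x hx).1 _ (hz k hk y hy).1).2
  -- g is eventually in a compact interval, so it has an ultralimit
  have hM : ∀ᶠ k in (𝒰 : Filter ℕ), g k ∈ Set.Icc (0 : ℝ) ((1 - ε) * D * (‖x - y‖ + 1)) := by
    have hnear : ∀ᶠ k : ℕ in (𝒰 : Filter ℕ), ‖z k x - z k y‖ ≤ ‖x - y‖ + 1 := by
      have : ∀ᶠ t in nhds ‖x - y‖, t ≤ ‖x - y‖ + 1 :=
        Filter.Tendsto.eventually_le_const (by linarith) tendsto_id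
      exact ha.eventually this
    filter_upwards [hhigh, hnear] with k h1 h2
    refine ⟨norm_nonneg _, h1.trans ?_⟩
    have h1εD : 0 ≤ (1 - ε) * D := by
      have := hε.2; have := hD; nlinarith
    nlinarith [norm_nonneg (z k x - z k y)]
  obtain ⟨l, _, hl⟩ := isCompact_Icc.ultrafilter_le_nhds (𝒰.map g)
    (by rw [Ultrafilter.coe_map, le_principal_iff]; exact hM)
  have htend : Tendsto g (𝒰 : Filter ℕ) (nhds l) := hl
  refine ⟨l, htend, ?_, ?_⟩
  · exact le_of_tendsto_of_tendsto ha htend hlow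
  · have : Tendsto (fun k : ℕ => (1 - ε) * D * ‖z k x - z k y‖) (𝒰 : Filter ℕ)
        (nhds ((1 - ε) * D * ‖x - y‖)) := ha.const_mul _
    exact le_of_tendsto_of_tendsto htend this hhigh
end
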